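/- arXiv:1109.1320 — 2 statements merged into one kernel-verified Lean document; each statement's English description precedes it below -/
import Mathlib

section
/- Assume Ĝ(t) ≤ c₀ e^{−c|t|} for all t ∈ ℝ, with constants c₀, c > 0. Let x ∈ [−1,1] and let {x_k}_{k=1}^∞ be a sequence of pairwise distinct points of [−1,1] with |x − x_k| < c/4 for all k. Then φ_x can be approximated in L²(ℝ, Ĝ(t)dt) with arbitrary accuracy by finite linear combinations of the functions φ_{x_k}; i.e., φ_x lies in the closed linear span of {φ_{x_k} : k ≥ 1}. -/
open MeasureTheory Set Metric Complex
open scoped ComplexConjugate Real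

/-!
Let `ψ` be orthogonal to every `φ_{x_k}` and put `F(z) = ∫ conj ψ(t) e^{izt} Ĝ(t) dt`. For
`a < c/2` the decay of `Ĝ` makes `(|t| + 1) e^{a|t|}` square-integrable against `Ĝ(t) dt`, and
by Cauchy–Schwarz this dominates both the integrand and its `z`-derivative on `|Im z| ≤ a`; hence
`F` is holomorphic on the strip `|Im z| < c/2`. It vanishes at the infinitely many distinct points
`x_k` of the compact set `[-1, 1]`, so by the identity theorem `F` vanishes on the whole (convex)
strip, and in particular `⟨ψ, φ_x⟩ = F(x) = 0`.
-/

lemma integrable_abs_pow_mul_exp_neg_mul_abs {δ : ℝ} (hδ : 0 < δ) (n : ℕ) :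
    Integrable fun t : ℝ => |t| ^ n * rexp (-δ * |t|) := by
  have hIoi : IntegrableOn (fun t : ℝ => |t| ^ n * rexp (-δ * |t|)) (Ioi 0) := by
    refine (integrableOn_rpow_mul_exp_neg_mul_rpow (p := 1) (s := n)
      (by linarith [n.cast_nonneg (α := ℝ)]) one_pos hδ).congr_fun
      (fun t (ht : 0 < t) => ?_) measurableSet_Ioi
    simp only [Real.rpow_one, Real.rpow_natCast, abs_of_pos ht]
  rw [← integrableOn_univ, ← Iio_union_Ici (a := (0 : ℝ)), integrableOn_union,
    integrableOn_Ici_iff_integrableOn_Ioi]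
  refine ⟨?_, hIoi⟩
  rw [← (Measure.measurePreserving_neg (volume : Measure ℝ)).integrableOn_comp_preimage
    (Homeomorph.neg ℝ).measurableEmbedding]
  simpa only [Function.comp_def, abs_neg, neg_preimage, neg_Iio, neg_zero] using hIoi

lemma memLp_two_abs_add_one_mul_exp_withDensity {G : ℝ → ℝ} (hG : Measurable G)
    (hG0 : ∀ t, 0 ≤ G t) {c₀ c a : ℝ} (hdecay : ∀ t, G t ≤ c₀ * rexp (-c * |t|))
    (hac : 2 * a < c) :
    MemLp (fun t : ℝ => (|t| + 1) * rexp (a * |t|)) 2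
      (volume.withDensity fun t => ENNReal.ofReal (G t)) := by
  have hw : Continuous fun t : ℝ => (|t| + 1) * rexp (a * |t|) := by fun_prop
  rw [memLp_two_iff_integrable_sq hw.aestronglyMeasurable,
    integrable_withDensity_iff hG.ennreal_ofReal (.of_forall fun _ => ENNReal.ofReal_lt_top)]
  have hδ : 0 < c - 2 * a := by linarith
  have hmajor :
      Integrable fun t : ℝ => c₀ * ((|t| + 1) ^ 2 * rexp (-(c - 2 * a) * |t|)) := by
    refine ((((integrable_abs_pow_mul_exp_neg_mul_abs hδ 2).add
      ((integrable_abs_pow_mul_exp_neg_mul_abs hδ 1).const_mul 2)).add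
      (integrable_abs_pow_mul_exp_neg_mul_abs hδ 0)).const_mul c₀).congr (.of_forall fun t => ?_)
    simp only [Pi.add_apply]
    ring
  refine hmajor.mono' ((hw.pow 2).aestronglyMeasurable.mul
    hG.ennreal_ofReal.ennreal_toReal.aestronglyMeasurable) (.of_forall fun t => ?_)
  rw [ENNReal.toReal_ofReal (hG0 t), Real.norm_of_nonneg (by have := hG0 t; positivity)]
  have hexp : rexp (-(c - 2 * a) * |t|) = rexp (a * |t|) ^ 2 * rexp (-c * |t|) := by
    rw [sq, ← Real.exp_add, ← Real.exp_add]
    ring_nf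
  calc ((|t| + 1) * rexp (a * |t|)) ^ 2 * G t
      ≤ ((|t| + 1) * rexp (a * |t|)) ^ 2 * (c₀ * rexp (-c * |t|)) := by gcongr; exact hdecay t
    _ = c₀ * ((|t| + 1) ^ 2 * rexp (-(c - 2 * a) * |t|)) := by rw [hexp]; ring

noncomputable def fourierLaplace (μ : Measure ℝ) (g : ℝ → ℂ) (z : ℂ) : ℂ :=
  ∫ t, g t * cexp (I * z * t) ∂μ

lemma norm_cexp_I_mul_mul_ofReal_le {z : ℂ} {a : ℝ} (hz : |z.im| ≤ a) (t : ℝ) :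
    ‖cexp (I * z * t)‖ ≤ rexp (a * |t|) := by
  rw [Complex.norm_exp, Real.exp_le_exp]
  have : (I * z * t).re = -(z.im * t) := by simp
  rw [this]
  calc -(z.im * t) ≤ |z.im| * |t| := by rw [← abs_mul]; exact neg_le_abs _
    _ ≤ a * |t| := by gcongr

lemma convex_abs_im_lt (b : ℝ) : Convex ℝ {z : ℂ | |z.im| < b} := by
  simp only [abs_lt]
  exact (convex_Ioo (-b) b).linear_preimage Complex.imLm

lemma isOpen_abs_im_lt (b : ℝ) : IsOpen {z : ℂ | |z.im| < b} :=
  isOpen_lt (by fun_prop) continuous_const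

section FourierLaplace

variable {μ : Measure ℝ} {g : ℝ → ℂ}

lemma hasDerivAt_fourierLaplace {a : ℝ} {z₀ : ℂ} (hg : MemLp g 2 μ)
    (hw : MemLp (fun t : ℝ => (|t| + 1) * rexp (a * |t|)) 2 μ) (hz₀ : |z₀.im| < a) :
    HasDerivAt (fourierLaplace μ g) (∫ t, g t * (I * t * cexp (I * z₀ * t)) ∂μ) z₀ := by
  have him_le : ∀ z ∈ ball z₀ (a - |z₀.im|), |z.im| ≤ a := fun z hz => by
    have h := (abs_sub_abs_le_abs_sub z.im z₀.im).trans
      ((sub_im z z₀ ▸ abs_im_le_norm (z - z₀)).trans (mem_ball_iff_norm.1 hz).le)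
    linarith
  set bound : ℝ → ℝ := fun t => ‖g t‖ * ((|t| + 1) * rexp (a * |t|))
  have hbound : Integrable bound μ := hg.norm.integrable_mul hw
  have hexp_le : ∀ t : ℝ, rexp (a * |t|) ≤ (|t| + 1) * rexp (a * |t|) := fun t =>
    le_mul_of_one_le_left (Real.exp_pos _).le (by linarith [abs_nonneg t])
  have hmeas : ∀ z : ℂ, AEStronglyMeasurable (fun t : ℝ => g t * cexp (I * z * t)) μ :=
    fun z => hg.aestronglyMeasurable.mul (by fun_prop : Continuous _).aestronglyMeasurable
  have hF_le : ∀ t : ℝ, ‖g t * cexp (I * z₀ * t)‖ ≤ bound t := fun t => by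
    rw [norm_mul]
    refine mul_le_mul_of_nonneg_left ?_ (norm_nonneg _)
    exact (norm_cexp_I_mul_mul_ofReal_le hz₀.le t).trans (hexp_le t)
  have hF'_le : ∀ z ∈ ball z₀ (a - |z₀.im|), ∀ t : ℝ,
      ‖g t * (I * t * cexp (I * z * t))‖ ≤ bound t := fun z hz t => by
    rw [norm_mul, norm_mul, norm_mul, norm_I, one_mul, norm_real, Real.norm_eq_abs]
    refine mul_le_mul_of_nonneg_left ?_ (norm_nonneg _)
    gcongr
    · linarith
    · exact norm_cexp_I_mul_mul_ofReal_le (him_le z hz) t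
  refine (hasDerivAt_integral_of_dominated_loc_of_deriv_le (ball_mem_nhds z₀ (sub_pos.2 hz₀))
    (.of_forall hmeas) (hbound.mono' (hmeas z₀) (.of_forall hF_le))
    (hg.aestronglyMeasurable.mul (by fun_prop : Continuous _).aestronglyMeasurable)
    (.of_forall fun t z hz => hF'_le z hz t) hbound (.of_forall fun t z _ => ?_)).2
  exact ((((hasDerivAt_id' z).const_mul I).mul_const (t : ℂ)).cexp.const_mul (g t))
    |>.congr_deriv (by ring)

lemma differentiableOn_fourierLaplace {b : ℝ} (hg : MemLp g 2 μ)
    (hw : ∀ a < b, MemLp (fun t : ℝ => (|t| + 1) * rexp (a * |t|)) 2 μ) :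
    DifferentiableOn ℂ (fourierLaplace μ g) {z : ℂ | |z.im| < b} := fun z hz => by
  obtain ⟨a, hza, hab⟩ := exists_between (show |z.im| < b from hz)
  exact (hasDerivAt_fourierLaplace hg (hw a hab) hza).differentiableAt.differentiableWithinAt

lemma inner_eq_fourierLaplace (ψ f : Lp ℂ 2 μ) {y : ℝ}
    (hf : (f : ℝ → ℂ) =ᵐ[μ] fun t => cexp (I * y * t)) :
    inner ℂ ψ f = fourierLaplace μ (fun t => conj (ψ t)) y := by
  rw [L2.inner_def]
  refine integral_congr_ae ?_
  filter_upwards [hf] with t ht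
  rw [RCLike.inner_apply, ht, mul_comm]

end FourierLaplace

lemma AnalyticOnNhd.eqOn_zero_of_infinite_zeros_of_isCompact {𝕜 E : Type*}
    [NontriviallyNormedField 𝕜] [NormedAddCommGroup E] [NormedSpace 𝕜 E] {f : 𝕜 → E}
    {U K S : Set 𝕜} (hf : AnalyticOnNhd 𝕜 f U) (hU : IsPreconnected U) (hK : IsCompact K)
    (hKU : K ⊆ U) (hS : S.Infinite) (hSK : S ⊆ K) (hfS : ∀ z ∈ S, f z = 0) : EqOn f 0 U := by
  obtain ⟨z₀, hz₀, hacc⟩ := hS.exists_accPt_of_subset_isCompact hK hSK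
  exact hf.eqOn_zero_of_preconnected_of_frequently_eq_zero hU (hKU hz₀)
    ((accPt_iff_frequently_nhdsNE.1 hacc).mono hfS)

theorem exp_mem_closed_span_of_close_points_general
    (Ghat : ℝ → ℝ) (hcont : Continuous Ghat)
    (hpos : ∀ t, 0 < Ghat t)
    (c₀ c : ℝ) (hc : 0 < c)
    (hdecay : ∀ t : ℝ, Ghat t ≤ c₀ * Real.exp (-c * |t|))
    (μ : Measure ℝ) (hμ : μ = volume.withDensity (fun t => ENNReal.ofReal (Ghat t)))
    (φ : ℝ → Lp ℂ 2 μ)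
    (hφ : ∀ x : ℝ, (φ x : ℝ → ℂ) =ᵐ[μ]
      fun t => Complex.exp (Complex.I * (x : ℂ) * (t : ℂ)))
    (x : ℝ)
    (xs : ℕ → ℝ) (hxs : ∀ k, xs k ∈ Set.Icc (-1 : ℝ) 1)
    (hdist : Function.Injective xs) :
    φ x ∈ closure ((Submodule.span ℂ (Set.range fun k => φ (xs k)) :
      Submodule ℂ (Lp ℂ 2 μ)) : Set (Lp ℂ 2 μ)) := by
  rw [← Submodule.topologicalClosure_coe, ← Submodule.orthogonal_orthogonal_eq_closure,
    SetLike.mem_coe, Submodule.mem_orthogonal]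
  intro ψ hψ
  have hF : AnalyticOnNhd ℂ (fourierLaplace μ fun t => conj (ψ t)) {z : ℂ | |z.im| < c / 2} :=
    (differentiableOn_fourierLaplace (Lp.memLp ψ).star fun a ha => hμ ▸
      memLp_two_abs_add_one_mul_exp_withDensity hcont.measurable (fun t => (hpos t).le) hdecay
        (by linarith)).analyticOnNhd (isOpen_abs_im_lt _)
  have hzeros :
      ∀ z ∈ range fun k => (xs k : ℂ), fourierLaplace μ (fun t => conj (ψ t)) z = 0 := by
    rintro _ ⟨k, rfl⟩
    rw [← inner_eq_fourierLaplace ψ _ (hφ _), ← inner_conj_symm,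
      hψ _ (Submodule.subset_span ⟨k, rfl⟩), map_zero]
  have hreal : ∀ y : ℝ, (y : ℂ) ∈ {z : ℂ | |z.im| < c / 2} := fun y => by
    simpa using half_pos hc
  rw [inner_eq_fourierLaplace ψ _ (hφ x)]
  exact hF.eqOn_zero_of_infinite_zeros_of_isCompact (convex_abs_im_lt _).isPreconnected
    (isCompact_Icc.image continuous_ofReal) (image_subset_iff.2 fun y _ => hreal y)
    (infinite_range_of_injective (ofReal_injective.comp hdist))
    (range_subset_iff.2 fun k => mem_image_of_mem _ (hxs k)) hzeros (hreal x)

/-- If `Ĝ(t) ≤ c₀ e^{-c|t|}` and `{x_k}` is a sequence of pairwise distinct points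
of `[-1,1]` with `|x - x_k| < c/4` for all `k`, then `φ_x` lies in the closed linear span of
`{φ_{x_k} : k ≥ 1}` in `L²(ℝ, Ĝ(t)dt)`. -/
theorem exp_mem_closed_span_of_close_points
    (Ghat : ℝ → ℝ) (hcont : Continuous Ghat) (heven : ∀ t, Ghat (-t) = Ghat t)
    (hpos : ∀ t, 0 < Ghat t) (hint : Integrable Ghat)
    (c₀ c : ℝ) (hc₀ : 0 < c₀) (hc : 0 < c)
    (hdecay : ∀ t : ℝ, Ghat t ≤ c₀ * Real.exp (-c * |t|))
    (μ : Measure ℝ) (hμ : μ = volume.withDensity (fun t => ENNReal.ofReal (Ghat t)))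
    (φ : ℝ → Lp ℂ 2 μ)
    (hφ : ∀ x : ℝ, (φ x : ℝ → ℂ) =ᵐ[μ]
      fun t => Complex.exp (Complex.I * (x : ℂ) * (t : ℂ)))
    (x : ℝ) (hx : x ∈ Set.Icc (-1 : ℝ) 1)
    (xs : ℕ → ℝ) (hxs : ∀ k, xs k ∈ Set.Icc (-1 : ℝ) 1)
    (hdist : Function.Injective xs)
    (hclose : ∀ k, |x - xs k| < c / 4) :
    φ x ∈ closure ((Submodule.span ℂ (Set.range fun k => φ (xs k)) :
      Submodule ℂ (Lp ℂ 2 μ)) : Set (Lp ℂ 2 μ)) :=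
  exp_mem_closed_span_of_close_points_general Ghat hcont hpos c₀ c hc hdecay μ hμ φ hφ x xs hxs
    hdist
end

section
/- With F(K) = T*(2K+1) − (2K+1) ln K, one has F(K)/K → −∞ as K → +∞ (K ranging over the positive integers). -/
open Filter Topology

/-- Legendre transform `T*(q) = sup_s (qs - T(s))`. -/
noncomputable def legendreTransform (T : ℝ → ℝ) (q : ℝ) : ℝ := ⨆ s : ℝ, (q * s - T s)

/-- `F(K) = T*(2K+1) - (2K+1) ln K`, where `T(s) = S(e^s)`. -/
noncomputable def Ffun (S : ℝ → ℝ) (K : ℕ) : ℝ :=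
  legendreTransform (fun s => S (Real.exp s)) (2 * K + 1) - (2 * K + 1) * Real.log K

/-!
`S` is convex on `(0, ∞)`, so its tangent line at a point where `S' ≥ L` is an affine minorant
`L t - c ≤ S t` on all of `(0, ∞)`. Comparing `T(s) = S(e^s)` with `L e^s - c`, whose Legendre
transform at `q` is `q (log (q / L) - 1) + c`, gives `F(K) ≤ q (log (q / (L K)) - 1) + c` for
`q = 2K + 1 ≤ 3K`; taking `L = 3 e^M` yields `F(K) ≤ c - M K`, and `M` is arbitrary.
-/

open Real Set

theorem ConvexOn.add_deriv_mul_sub_le {D : Set ℝ} {f : ℝ → ℝ} {a x : ℝ} (hf : ConvexOn ℝ D f)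
    (ha : a ∈ D) (hx : x ∈ D) (hfa : DifferentiableAt ℝ f a) :
    f a + deriv f a * (x - a) ≤ f x := by
  rcases lt_trichotomy a x with hax | rfl | hxa
  · have h := hf.deriv_le_slope ha hx hax hfa
    rw [slope_def_field, le_div_iff₀ (sub_pos.2 hax)] at h
    linarith
  · simp
  · have h := hf.slope_le_deriv hx ha hxa hfa
    rw [slope_def_field, div_le_iff₀ (sub_pos.2 hxa)] at h
    linarith

theorem ContDiffOn.convexOn_Ioi_of_deriv2_nonneg {f : ℝ → ℝ} {a : ℝ}
    (hf : ContDiffOn ℝ 2 f (Ioi a)) (hf'' : ∀ x > a, 0 ≤ deriv (deriv f) x) :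
    ConvexOn ℝ (Ioi a) f :=
  convexOn_of_deriv2_nonneg' (convex_Ioi a) (hf.differentiableOn (by norm_num))
    ((hf.deriv_of_isOpen (m := 1) isOpen_Ioi (by norm_num)).differentiableOn one_ne_zero) hf''

theorem ConvexOn.exists_mul_sub_le_of_tendsto_deriv {f : ℝ → ℝ}
    (hf : ConvexOn ℝ (Ioi 0) f) (hfd : DifferentiableOn ℝ f (Ioi 0))
    (hf' : Tendsto (deriv f) atTop atTop) (L : ℝ) :
    ∃ c, ∀ x > 0, L * x - c ≤ f x := by
  obtain ⟨b, hbL, hb⟩ := ((hf'.eventually_ge_atTop L).and (eventually_gt_atTop 0)).exists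
  refine ⟨deriv f b * b - f b, fun x hx => ?_⟩
  have := hf.add_deriv_mul_sub_le hb hx (hfd.differentiableAt (Ioi_mem_nhds hb))
  nlinarith

theorem mul_sub_mul_exp_le {q b : ℝ} (hq : 0 < q) (hb : 0 < b) (u : ℝ) :
    q * u - b * exp u ≤ q * (log (q / b) - 1) := by
  have h := add_one_le_exp (u - log (q / b))
  rw [exp_sub, exp_log (div_pos hq hb), div_div_eq_mul_div, le_div_iff₀ hq] at h
  nlinarith [mul_comm b (exp u)]

theorem legendreTransform_comp_exp_le {S : ℝ → ℝ} {L c q : ℝ} (hL : 0 < L) (hq : 0 < q)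
    (hS : ∀ t > 0, L * t - c ≤ S t) :
    legendreTransform (fun s => S (exp s)) q ≤ q * (log (q / L) - 1) + c :=
  ciSup_le fun s => by
    have := hS _ (exp_pos s)
    have := mul_sub_mul_exp_le hq hL s
    linarith

theorem Ffun_le_sub_mul {S : ℝ → ℝ} {M c : ℝ} (hM : 0 ≤ M)
    (hS : ∀ t > 0, 3 * exp M * t - c ≤ S t) {K : ℕ} (hK : 0 < K) : Ffun S K ≤ c - M * K := by
  have hK' : (1 : ℝ) ≤ K := by exact_mod_cast hK
  set q : ℝ := 2 * K + 1
  have hq : 0 < q := by positivity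
  have hlog : log (q / (3 * exp M)) - log K ≤ -M := by
    rw [← log_div (by positivity) (by positivity), ← log_exp (-M)]
    gcongr
    rw [exp_neg, div_div, div_le_iff₀ (by positivity)]
    field_simp
    linarith
  have hT := legendreTransform_comp_exp_le (by positivity) hq hS
  have : Ffun S K = legendreTransform (fun s => S (exp s)) q - q * log K := rfl
  nlinarith [mul_le_mul_of_nonneg_left hlog hq.le]

theorem F_div_K_tendsto_atBot_general
    (S : ℝ → ℝ) (hS : ContDiffOn ℝ 2 S (Set.Ioi 0))
    (hS'' : ∀ t > 0, 0 ≤ deriv (deriv S) t)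
    (hS'inf : Tendsto (deriv S) atTop atTop) :
    Tendsto (fun K : ℕ => Ffun S K / K) atTop atBot := by
  refine tendsto_atBot.2 fun b => ?_
  obtain ⟨c, hc⟩ := (hS.convexOn_Ioi_of_deriv2_nonneg hS'').exists_mul_sub_le_of_tendsto_deriv
    (hS.differentiableOn two_ne_zero) hS'inf (3 * exp (|b| + 1))
  filter_upwards [eventually_gt_atTop 0,
    (tendsto_const_div_atTop_nhds_zero_nat c).eventually (gt_mem_nhds one_pos)] with K hK hcK
  have hKpos : (0 : ℝ) < K := by exact_mod_cast hK
  calc Ffun S K / K ≤ (c - (|b| + 1) * K) / K := by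
        gcongr
        exact Ffun_le_sub_mul (by positivity) hc hK
    _ = c / K - (|b| + 1) := by field_simp
    _ ≤ b := by linarith [neg_abs_le b]

/-- `F(K)/K → -∞` as `K → ∞` over the positive integers. -/
theorem F_div_K_tendsto_atBot
    (S : ℝ → ℝ) (hS : ContDiffOn ℝ 2 S (Set.Ioi 0))
    (hS' : ∀ t > 0, 0 ≤ deriv S t) (hS'' : ∀ t > 0, 0 ≤ deriv (deriv S) t)
    (hS'inf : Tendsto (deriv S) atTop atTop) :
    Tendsto (fun K : ℕ => Ffun S K / K) atTop atBot :=
  F_div_K_tendsto_atBot_general S hS hS'' hS'inf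
end
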